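/- arXiv:2509.08503 — 3 statements merged into one kernel-verified Lean document; each statement's English description precedes it below -/
import Mathlib

section
/- Let w be a word of length n and P a set of positions of w. Then P is a word attractor of w if and only if, for every nonempty factor v of w, the shortest nonempty factor u of w satisfying EP(u) = EP(v) covers P. -/
open List

variable {α : Type*}

/-- `(i, j)` is an occurrence of `u` in `w`: `1 ≤ i ≤ j ≤ |w|` and `u = w[i,j]`. -/
def Occ (w u : List α) (i j : ℕ) : Prop :=
  1 ≤ i ∧ i ≤ j ∧ j ≤ w.length ∧ u = (w.drop (i - 1)).take (j - i + 1)

/-- `u` is a factor of `w`: it has an occurrence in `w`. -/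
def IsFactor (w u : List α) : Prop := ∃ i j, Occ w u i j

/-- `EP w u` is the set of ending positions of occurrences of `u` in `w`. -/
def EP (w u : List α) : Set ℕ := { j | ∃ i, Occ w u i j }

/-- `u` covers `P`: some occurrence `(i, j)` of `u` in `w` contains a position of `P`. -/
def Covers (w : List α) (P : Set ℕ) (u : List α) : Prop :=
  ∃ i j, Occ w u i j ∧ ∃ t ∈ P, i ≤ t ∧ t ≤ j

/-- `P` is a word attractor of `w`: every nonempty factor of `w` covers `P`. -/
def IsAttractor (w : List α) (P : Set ℕ) : Prop :=
  ∀ u : List α, u ≠ [] → IsFactor w u → Covers w P u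

lemma occ_length {w u : List α} {i j : ℕ} (h : Occ w u i j) : u.length = j - i + 1 := by
  obtain ⟨h1, h2, h3, h4⟩ := h
  subst h4
  simp only [length_take, length_drop]
  omega

/-- A set `P` of positions of `w` is a word attractor of `w` if and only if, for every
nonempty factor `v` of `w`, the shortest nonempty factor `u` of `w` with `EP u = EP v`
covers `P`. -/
theorem stmt0 (w : List α) (P : Set ℕ) (hP : P ⊆ Set.Icc 1 w.length) :
    IsAttractor w P ↔
      ∀ v : List α, v ≠ [] → IsFactor w v →
        ∀ u : List α, u ≠ [] → IsFactor w u → EP w u = EP w v →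
          (∀ u' : List α, u' ≠ [] → IsFactor w u' → EP w u' = EP w v →
            u.length ≤ u'.length) →
          Covers w P u := by
  constructor
  · intro h v hv hfv u hu hfu _ _
    exact h u hu hfu
  · intro h v hv hfv
    classical
    have hex : ∃ n, ∃ u : List α, u ≠ [] ∧ IsFactor w u ∧ EP w u = EP w v ∧ u.length = n :=
      ⟨v.length, v, hv, hfv, rfl, rfl⟩
    obtain ⟨u, hu, hfu, hEP, hlen⟩ := Nat.find_spec hex
    have hmin : ∀ u' : List α, u' ≠ [] → IsFactor w u' → EP w u' = EP w v →
        u.length ≤ u'.length := by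
      intro u' h1 h2 h3
      rw [hlen]
      exact Nat.find_min' hex ⟨u', h1, h2, h3, rfl⟩
    obtain ⟨i, j, hocc, t, htP, hit, htj⟩ := h v hv hfv u hu hfu hEP hmin
    have hj : j ∈ EP w v := hEP ▸ ⟨i, hocc⟩
    obtain ⟨i', hocc'⟩ := hj
    have hul : u.length = j - i + 1 := occ_length hocc
    have hvl : v.length = j - i' + 1 := occ_length hocc'
    have hle : u.length ≤ v.length := hmin v hv hfv rfl
    obtain ⟨h1, h2, h3, -⟩ := id hocc
    obtain ⟨h1', h2', h3', -⟩ := id hocc'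
    exact ⟨i', j, hocc', t, htP, by omega, htj⟩
end

section
/- Let w be a word of length n and P a set of positions of w. Then P is a word attractor of w if and only if, for every nonempty factor u of w, d_P(u) < ℓ(u). -/
open List

variable {α : Type*}

/-- `dPos P j = min({ j - i : i ∈ P, i ≤ j } ∪ {+∞})`, the distance from `j` to `P` on the left. -/
noncomputable def dPos (P : Set ℕ) (j : ℕ) : ℕ∞ :=
  sInf { d : ℕ∞ | ∃ i ∈ P, i ≤ j ∧ d = ((j - i : ℕ) : ℕ∞) }

/-- `dFac w P u = min { dPos P j : j ∈ EP w u }`. -/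
noncomputable def dFac (w : List α) (P : Set ℕ) (u : List α) : ℕ∞ :=
  sInf { d : ℕ∞ | ∃ j ∈ EP w u, d = dPos P j }

/-- `ell w u` is the minimum length of a nonempty factor `v` of `w` with `EP v = EP u`. -/
noncomputable def ell (w u : List α) : ℕ :=
  sInf { m : ℕ | ∃ v : List α, v ≠ [] ∧ IsFactor w v ∧ EP w v = EP w u ∧ v.length = m }

/-- `P` is a word attractor of `w` if and only if, for every nonempty factor `u` of `w`,
`d_P(u) < ℓ(u)`. -/
theorem stmt6 (w : List α) (P : Set ℕ) (hP : P ⊆ Set.Icc 1 w.length) :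
    IsAttractor w P ↔
      ∀ u : List α, u ≠ [] → IsFactor w u → dFac w P u < (ell w u : ℕ∞) := by
  constructor
  · intro hA u hu hfu
    have hne : (u.length) ∈ { m : ℕ | ∃ v : List α, v ≠ [] ∧ IsFactor w v ∧
        EP w v = EP w u ∧ v.length = m } := ⟨u, hu, hfu, rfl, rfl⟩
    obtain ⟨v, hv, hfv, hEP, hvlen⟩ := Nat.sInf_mem ⟨u.length, hne⟩
    obtain ⟨i, j, hocc, t, htP, hit, htj⟩ := hA v hv hfv
    have hj : j ∈ EP w u := hEP ▸ ⟨i, hocc⟩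
    have h1 : dFac w P u ≤ dPos P j := sInf_le ⟨j, hj, rfl⟩
    have h2 : dPos P j ≤ ((j - t : ℕ) : ℕ∞) := sInf_le ⟨t, htP, htj, rfl⟩
    have hlen := occ_length hocc
    have h3 : j - t < ell w u := by
      have : v.length = ell w u := hvlen
      omega
    exact lt_of_le_of_lt (h1.trans h2) (by exact_mod_cast h3)
  · intro h u hu hfu
    have hell_le : ell w u ≤ u.length := Nat.sInf_le ⟨u, hu, hfu, rfl, rfl⟩
    have hlt : dFac w P u < (u.length : ℕ∞) :=
      lt_of_lt_of_le (h u hu hfu) (by exact_mod_cast hell_le)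
    rw [dFac, sInf_lt_iff] at hlt
    obtain ⟨d, ⟨j, hj, rfl⟩, hd⟩ := hlt
    rw [dPos, sInf_lt_iff] at hd
    obtain ⟨d', ⟨i, hiP, hij, rfl⟩, hd'⟩ := hd
    have hji : j - i < u.length := by exact_mod_cast hd'
    obtain ⟨i₀, hocc⟩ := hj
    have hlen := occ_length hocc
    refine ⟨i₀, j, hocc, i, hiP, ?_, hij⟩
    have := hocc.1
    have := hocc.2.1
    omega
end

section
/- Let x be an infinite sequence over a finite alphabet Σ with appearance bound A, let n ≥ 1, and let w = x[1,n] be the prefix of x of length n. Then for every integer k ≥ 0 there exists a set P of positions of w with |P| ≤ |Σ| + 2·A·k such that every nonempty factor of w of length at most 2^k covers P. -/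
open List

variable {α : Type*}

/-- The prefix `x[1,n]` of the infinite sequence `x = x₁x₂⋯`. -/
def pref (x : ℕ → α) (n : ℕ) : List α := (List.range n).map fun k => x (k + 1)

/-- `u` is a factor of the infinite sequence `x`. -/
def IsFactorInf (x : ℕ → α) (u : List α) : Prop := ∃ N, IsFactor (pref x N) u

/-- `x` has appearance bound `A`: for every `m ≥ 1`, every factor of `x` of length `m`
occurs as a factor of the prefix `x[1, A·m]`. -/
def HasAppearanceBound (x : ℕ → α) (A : ℕ) : Prop :=
  ∀ m : ℕ, 1 ≤ m → ∀ u : List α, u.length = m → IsFactorInf x u →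
    IsFactor (pref x (A * m)) u

lemma pref_length (x : ℕ → α) (n : ℕ) : (pref x n).length = n := by
  simp [pref]

lemma pref_take (x : ℕ → α) {n N : ℕ} (h : n ≤ N) : (pref x N).take n = pref x n := by
  simp [pref, ← List.map_take, List.take_range, Nat.min_eq_left h]

lemma seg_eq (x : ℕ → α) {n N i j : ℕ} (hi : 1 ≤ i) (hij : i ≤ j) (hjn : j ≤ n)
    (hnN : n ≤ N) :
    ((pref x n).drop (i-1)).take (j-i+1) = ((pref x N).drop (i-1)).take (j-i+1) := by
  rw [← pref_take x hnN, List.drop_take, List.take_take]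
  congr 1
  omega

lemma occ_trans (x : ℕ → α) {n N u i j} (h : Occ (pref x N) u i j) (hj : j ≤ n) :
    Occ (pref x n) u i j := by
  obtain ⟨h1, h2, h3, h4⟩ := h
  rw [pref_length] at h3
  refine ⟨h1, h2, by rw [pref_length]; exact hj, ?_⟩
  rcases le_total n N with hnN | hNn
  · rw [h4, seg_eq x h1 h2 hj hnN]
  · rw [h4, seg_eq x h1 h2 h3 hNn]

lemma occ_single (x : ℕ → α) {n t : ℕ} (h1 : 1 ≤ t) (h2 : t ≤ n) :
    Occ (pref x n) [x t] t t := by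
  refine ⟨h1, le_refl _, by rw [pref_length]; exact h2, ?_⟩
  have ht : t - 1 < (pref x n).length := by rw [pref_length]; omega
  rw [List.drop_eq_getElem_cons ht]
  have : (pref x n)[t-1] = x t := by
    simp [pref]
    congr 1
    omega
  simp [this]

lemma exists_mult {q i j : ℕ} (hq : 1 ≤ q) (hi : 1 ≤ i) (hij : i + q ≤ j + 1) :
    ∃ c : ℕ, 1 ≤ c ∧ i ≤ c * q ∧ c * q ≤ j := by
  refine ⟨(i + q - 1) / q, (Nat.one_le_div_iff hq).mpr (by omega), ?_, ?_⟩
  · have h1 := Nat.div_add_mod (i + q - 1) q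
    have h2 := Nat.mod_lt (i + q - 1) (show 0 < q by omega)
    have h3 : (i + q - 1) / q * q = q * ((i + q - 1) / q) := Nat.mul_comm _ _
    rw [h3]
    omega
  · calc (i + q - 1) / q * q ≤ i + q - 1 := Nat.div_mul_le_self _ _
      _ ≤ j := by omega

open Classical in
noncomputable def basePos (x : ℕ → α) (n : ℕ) (a : α) : ℕ :=
  if h : ∃ t, 1 ≤ t ∧ t ≤ n ∧ x t = a then h.choose else 1

/-- For an infinite sequence `x` over a finite alphabet with appearance bound `A`, and
`w = x[1,n]` with `n ≥ 1`: for every `k ≥ 0` there is a set `P` of positions of `w` of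
size at most `|Σ| + 2·A·k` such that every nonempty factor of `w` of length at most `2^k`
covers `P`. -/
theorem stmt10 {α : Type*} [Fintype α] (x : ℕ → α) (A : ℕ) (hA : 1 ≤ A)
    (happ : HasAppearanceBound x A) (n : ℕ) (hn : 1 ≤ n) (k : ℕ) :
    ∃ P : Finset ℕ, ↑P ⊆ Set.Icc 1 n ∧ P.card ≤ Fintype.card α + 2 * A * k ∧
      ∀ u : List α, u ≠ [] → IsFactor (pref x n) u → u.length ≤ 2 ^ k →
        Covers (pref x n) ↑P u := by
  classical
  induction k with
  | zero =>
    refine ⟨Finset.univ.image (basePos x n), ?_, ?_, ?_⟩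
    · intro t ht
      simp only [Finset.coe_image, Finset.coe_univ, Set.image_univ, Set.mem_range] at ht
      obtain ⟨a, rfl⟩ := ht
      unfold basePos
      split
      · next h => exact ⟨h.choose_spec.1, h.choose_spec.2.1⟩
      · exact ⟨le_refl 1, hn⟩
    · have h1 : (Finset.univ.image (basePos x n)).card ≤ Fintype.card α := by
        calc (Finset.univ.image (basePos x n)).card ≤ (Finset.univ : Finset α).card :=
              Finset.card_image_le
          _ = Fintype.card α := Finset.card_univ
      omega
    · intro u hu hf hlen
      obtain ⟨i, j, ho⟩ := hf
      have hl1 : u.length = 1 := by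
        have h0 := List.length_pos_iff.mpr hu
        have : (2:ℕ) ^ 0 = 1 := pow_zero 2
        omega
      obtain ⟨a, rfl⟩ := List.length_eq_one_iff.mp hl1
      have hjn : j ≤ n := by have := ho.2.2.1; rwa [pref_length] at this
      have hi1 : i - 1 < (pref x n).length := by
        rw [pref_length]; have := ho.2.1; omega
      have ha : a = x i := by
        have h4 := ho.2.2.2
        rw [List.drop_eq_getElem_cons hi1] at h4
        have hji : j - i + 1 = (j - i) + 1 := rfl
        rw [hji, List.take_succ_cons] at h4
        have hgi : (pref x n)[i-1] = x i := by
          simp only [pref, List.getElem_map, List.getElem_range]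
          congr 1
          have := ho.1; omega
        rw [hgi] at h4
        exact (List.cons_eq_cons.mp h4).1
      have hex : ∃ t, 1 ≤ t ∧ t ≤ n ∧ x t = a :=
        ⟨i, ho.1, le_trans ho.2.1 hjn, ha.symm⟩
      obtain ⟨ht1, ht2, ht3⟩ := hex.choose_spec
      refine ⟨hex.choose, hex.choose, ?_, hex.choose, ?_, le_refl _, le_refl _⟩
      · have := occ_single x ht1 ht2
        rwa [ht3] at this
      · refine Finset.mem_coe.mpr (Finset.mem_image.mpr ⟨a, Finset.mem_univ a, ?_⟩)
        simp only [basePos, dif_pos hex]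
  | succ k ih =>
    obtain ⟨P, hPsub, hPcard, hPcov⟩ := ih
    set G : Finset ℕ :=
      ((Finset.Icc 1 (2*A)).image (fun c => c * 2^k)).filter (· ≤ n) with hG
    have hq : 1 ≤ 2^k := Nat.one_le_two_pow
    have hGmem : ∀ {c : ℕ}, 1 ≤ c → c ≤ 2*A → c * 2^k ≤ n → c * 2^k ∈ G := by
      intro c h1 h2 h3
      rw [hG, Finset.mem_filter]
      exact ⟨Finset.mem_image.mpr ⟨c, Finset.mem_Icc.mpr ⟨h1, h2⟩, rfl⟩, h3⟩
    refine ⟨P ∪ G, ?_, ?_, ?_⟩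
    · intro t ht
      simp only [Finset.coe_union, Set.mem_union] at ht
      rcases ht with h | h
      · exact hPsub h
      · rw [Finset.mem_coe, hG, Finset.mem_filter] at h
        obtain ⟨hmem, hcn⟩ := h
        obtain ⟨c, hc, rfl⟩ := Finset.mem_image.mp hmem
        obtain ⟨hc1, hc2⟩ := Finset.mem_Icc.mp hc
        refine ⟨?_, hcn⟩
        calc 1 = 1 * 1 := (one_mul 1).symm
          _ ≤ c * 2^k := Nat.mul_le_mul hc1 hq
    · have h1 := Finset.card_union_le P G
      have h2 : G.card ≤ 2*A := by
        calc G.card ≤ ((Finset.Icc 1 (2*A)).image (fun c => c * 2^k)).card :=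
              Finset.card_filter_le _ _
          _ ≤ (Finset.Icc 1 (2*A)).card := Finset.card_image_le
          _ = 2*A := by rw [Nat.card_Icc]; omega
      have h3 : 2*A*(k+1) = 2*A*k + 2*A := by ring
      omega
    · intro u hu hf hlen
      by_cases hsm : u.length ≤ 2^k
      · obtain ⟨i, j, ho, t, ht, hti, htj⟩ := hPcov u hu hf hsm
        exact ⟨i, j, ho, t,
          by simp only [Finset.coe_union, Set.mem_union]; exact Or.inl ht, hti, htj⟩
      · push_neg at hsm
        have hm1 : 1 ≤ u.length := le_trans hq (le_of_lt hsm)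
        obtain ⟨i0, j0, ho0⟩ := hf
        obtain ⟨i, j, ho⟩ := happ u.length hm1 u rfl ⟨n, i0, j0, ho0⟩
        have hAm : A * u.length ≤ 2*A*2^k := by
          calc A * u.length ≤ A * 2^(k+1) := Nat.mul_le_mul_left _ hlen
            _ = 2*A*2^k := by ring
        have hjAm : j ≤ A * u.length := by have := ho.2.2.1; rwa [pref_length] at this
        have hj0n : j0 ≤ n := by have := ho0.2.2.1; rwa [pref_length] at this
        by_cases hjn : j ≤ n
        · have ho' : Occ (pref x n) u i j := occ_trans x ho hjn
          have hlo := occ_length ho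
          have hij := ho.2.1
          have hij2 : i + 2^k ≤ j + 1 := by omega
          obtain ⟨c, hc1, hc2, hc3⟩ := exists_mult hq ho.1 hij2
          have hcA : c ≤ 2*A := by
            have hle : c * 2^k ≤ 2*A*2^k := le_trans hc3 (le_trans hjAm hAm)
            exact Nat.le_of_mul_le_mul_right hle (by omega)
          exact ⟨i, j, ho', c*2^k,
            Finset.mem_coe.mpr (Finset.mem_union_right _
              (hGmem hc1 hcA (le_trans hc3 hjn))), hc2, hc3⟩
        · push_neg at hjn
          have hlo := occ_length ho0
          have hij := ho0.2.1
          have hij2 : i0 + 2^k ≤ j0 + 1 := by omega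
          obtain ⟨c, hc1, hc2, hc3⟩ := exists_mult hq ho0.1 hij2
          have hcA : c ≤ 2*A := by
            have hlt : c * 2^k < 2*A*2^k :=
              lt_of_le_of_lt (le_trans hc3 hj0n) (lt_of_lt_of_le hjn (le_trans hjAm hAm))
            exact le_of_lt (Nat.lt_of_mul_lt_mul_right hlt)
          exact ⟨i0, j0, ho0, c*2^k,
            Finset.mem_coe.mpr (Finset.mem_union_right _
              (hGmem hc1 hcA (le_trans hc3 hj0n))), hc2, hc3⟩
end
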